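/- Let c be an m-exponent and B ∈ F(c). Then M := ∑_{j=1}^m c_j B_j^* B_j is positive definite, each ψ(B)_j ψ(B)_j^* is positive definite (so that Φ(B) := φ(ψ(B)) is well defined), and moreover Φ(B) is equivalent to B and Φ(B) ∈ F(c). -/

import Mathlib

open MeasureTheory ENNReal Matrix Filter Topology

noncomputable section

/-- The space of `m`-transformations: tuples of linear maps `ℝ^n → ℝ^{n_j}`,
represented as matrices. -/
abbrev MTrans (m n : ℕ) (nd : Fin m → ℕ) := ∀ j : Fin m, Matrix (Fin (nd j)) (Fin n) ℝ

/-- A valid input for the Brascamp–Lieb inequality: each `f j` is measurable and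
has positive finite integral. -/
def IsInput {m : ℕ} {nd : Fin m → ℕ} (f : ∀ j : Fin m, (Fin (nd j) → ℝ) → ℝ≥0∞) : Prop :=
  ∀ j, Measurable (f j) ∧ 0 < ∫⁻ y, f j y ∧ ∫⁻ y, f j y < ⊤

/-- The Brascamp–Lieb ratio `BL(B,c;f)`. -/
def BLratio {m n : ℕ} {nd : Fin m → ℕ} (B : MTrans m n nd) (c : Fin m → ℝ)
    (f : ∀ j : Fin m, (Fin (nd j) → ℝ) → ℝ≥0∞) : ℝ≥0∞ :=
  (∫⁻ x : Fin n → ℝ, ∏ j, f j (B j *ᵥ x) ^ c j) / ∏ j, (∫⁻ y, f j y) ^ c j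

/-- The Brascamp–Lieb constant `BL(B,c)`. -/
def BLconst {m n : ℕ} {nd : Fin m → ℕ} (B : MTrans m n nd) (c : Fin m → ℝ) : ℝ≥0∞ :=
  ⨆ (f : ∀ j : Fin m, (Fin (nd j) → ℝ) → ℝ≥0∞) (_ : IsInput f), BLratio B c f

/-- Membership in `F(c)`: finite BL constant and projection-normalised. -/
def MemF {m n : ℕ} {nd : Fin m → ℕ} (B : MTrans m n nd) (c : Fin m → ℝ) : Prop :=
  BLconst B c < ⊤ ∧ ∀ j, B j * (B j)ᵀ = 1

/-- Membership in `G(c)`: the datum `(B,c)` is geometric. -/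
def Geometric {m n : ℕ} {nd : Fin m → ℕ} (B : MTrans m n nd) (c : Fin m → ℝ) : Prop :=
  (∀ j, B j * (B j)ᵀ = 1) ∧ ∑ j, c j • ((B j)ᵀ * B j) = 1

/-- Equivalence of `m`-transformations: `B̃_j = T_j⁻¹ B_j T` for invertible `T, T_j`. -/
def EquivTrans {m n : ℕ} {nd : Fin m → ℕ} (B Bt : MTrans m n nd) : Prop :=
  ∃ (T : Matrix (Fin n) (Fin n) ℝ) (Tj : ∀ j, Matrix (Fin (nd j)) (Fin (nd j)) ℝ),
    IsUnit T ∧ (∀ j, IsUnit (Tj j)) ∧ ∀ j, Bt j = (Tj j)⁻¹ * B j * T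

open Classical in
/-- The map `φ`: `φ(B)_j = (B_j B_j^*)^{-1/2} B_j` (defined where `B_j B_j^*` is
positive definite, and as `B_j` otherwise). -/
def phiMap {m n : ℕ} {nd : Fin m → ℕ} (B : MTrans m n nd) : MTrans m n nd := fun j =>
  if h : (B j * (B j)ᵀ).PosDef then ((h.posSemidef.1.eigenvectorUnitary : Matrix (Fin (nd j)) (Fin (nd j)) ℝ) *
      diagonal (Real.sqrt ∘ h.posSemidef.1.eigenvalues) *
      (star h.posSemidef.1.eigenvectorUnitary : Matrix (Fin (nd j)) (Fin (nd j)) ℝ))⁻¹ * B j else B j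

open Classical in
/-- The map `ψ`: `ψ(B)_j = B_j M^{-1/2}` with `M = ∑ c_j B_j^* B_j` (defined where `M`
is positive definite, and as `B_j` otherwise). -/
def psiMap {m n : ℕ} {nd : Fin m → ℕ} (c : Fin m → ℝ) (B : MTrans m n nd) : MTrans m n nd :=
  fun j =>
    if h : (∑ i, c i • ((B i)ᵀ * B i)).PosDef then B j * ((h.posSemidef.1.eigenvectorUnitary : Matrix (Fin n) (Fin n) ℝ) *
      diagonal (Real.sqrt ∘ h.posSemidef.1.eigenvalues) *
      (star h.posSemidef.1.eigenvectorUnitary : Matrix (Fin n) (Fin n) ℝ))⁻¹ else B j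

/-- The BL scaling map `Φ = φ ∘ ψ`. -/
def PhiMap {m n : ℕ} {nd : Fin m → ℕ} (c : Fin m → ℝ) (B : MTrans m n nd) : MTrans m n nd :=
  phiMap (psiMap c B)

/-- The operator norm of a matrix, viewed as a linear map between Euclidean spaces. -/
def opNorm {a b : ℕ} (A : Matrix (Fin a) (Fin b) ℝ) : ℝ :=
  ‖LinearMap.toContinuousLinearMap (Matrix.toEuclideanLin A)‖

/-!
If the maps `B j` had a common kernel vector `u ≠ 0`, then for `f j` the indicator of the unit
ball the integrand of `BL(B, c; f)` would be the indicator of a neighbourhood of `0` that is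
invariant under translation along `u`, a set of infinite measure. So finiteness of `BL(B, c)`
makes `M = ∑ c j • (B j)ᵀ * B j` positive definite; `ψ(B)_j = B_j M^{-1/2}` then has a right
inverse `M^{1/2} (B j)ᵀ`, so `ψ(B)_j ψ(B)_jᵀ` is positive definite, and
`Φ(B)_j = N_j⁻¹ B_j M^{-1/2}` with `N_j = (ψ(B)_j ψ(B)_jᵀ)^{1/2}` is equivalent to `B`.
By the change of variables formula an equivalence multiplies the Brascamp–Lieb functional
by finite determinant factors, so `BL(Φ(B), c) < ∞`, while `φ` normalises each `Φ(B)_j Φ(B)_jᵀ` to `1`.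
-/

section RealMatrix

variable {ι κ : Type*} [Fintype ι] [DecidableEq ι] [Fintype κ]

lemma cfc_sqrt_mul_self {M : Matrix ι ι ℝ} (hM : M.PosSemidef) :
    cfc Real.sqrt M * cfc Real.sqrt M = M := by
  have hsa : IsSelfAdjoint M := hM.isHermitian
  rw [← cfc_mul Real.sqrt Real.sqrt M]
  conv_rhs => rw [← cfc_id ℝ M]
  refine cfc_congr fun x hx => Real.mul_self_sqrt ?_
  rw [hM.isHermitian.spectrum_real_eq_range_eigenvalues] at hx
  obtain ⟨i, rfl⟩ := hx
  exact hM.eigenvalues_nonneg i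

lemma transpose_cfc (f : ℝ → ℝ) (M : Matrix ι ι ℝ) : (cfc f M)ᵀ = cfc f M := by
  rw [← conjTranspose_eq_transpose_of_trivial]
  exact (IsSelfAdjoint.cfc (f := f) (a := M)).star_eq

lemma isUnit_cfc_sqrt {M : Matrix ι ι ℝ} (hM : M.PosDef) : IsUnit (cfc Real.sqrt M) :=
  isUnit_of_mul_isUnit_left ((cfc_sqrt_mul_self hM.posSemidef).symm ▸ hM.isUnit)

lemma inv_cfc_sqrt_mul_transpose_self {A : Matrix ι κ ℝ} (hA : (A * Aᵀ).PosDef) :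
    (cfc Real.sqrt (A * Aᵀ))⁻¹ * A * ((cfc Real.sqrt (A * Aᵀ))⁻¹ * A)ᵀ = 1 := by
  have hS : IsUnit (cfc Real.sqrt (A * Aᵀ)).det :=
    (isUnit_iff_isUnit_det _).1 (isUnit_cfc_sqrt hA)
  have hSS := cfc_sqrt_mul_self hA.posSemidef
  have hSt := transpose_cfc Real.sqrt (A * Aᵀ)
  set S := cfc Real.sqrt (A * Aᵀ)
  calc S⁻¹ * A * (S⁻¹ * A)ᵀ = S⁻¹ * (A * Aᵀ) * S⁻¹ := by
        rw [transpose_mul, transpose_nonsing_inv, hSt]; simp only [Matrix.mul_assoc]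
    _ = S⁻¹ * S * (S * S⁻¹) := by rw [← hSS]; simp only [Matrix.mul_assoc]
    _ = 1 := by rw [nonsing_inv_mul S hS, mul_nonsing_inv S hS, Matrix.one_mul]

lemma posDef_mul_transpose_self_of_mul_eq_one [DecidableEq κ] {C : Matrix ι κ ℝ}
    {D : Matrix κ ι ℝ} (hCD : C * D = 1) : (C * Cᵀ).PosDef := by
  have hC : Function.Injective C.vecMul := fun x y hxy => by
    simpa [vecMul_vecMul, hCD, vecMul_one] using congrArg (· ᵥ* D) hxy
  simpa using PosDef.one.mul_mul_conjTranspose_same hC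

end RealMatrix

lemma posDef_sum_smul_transpose_mul_self {ι m : Type*} [Fintype ι] [Fintype m]
    {κ : m → Type*} [∀ j, Fintype (κ j)] {B : ∀ j, Matrix (κ j) ι ℝ} {c : m → ℝ}
    (hc : ∀ j, 0 < c j) (hker : ∀ u : ι → ℝ, (∀ j, B j *ᵥ u = 0) → u = 0) :
    (∑ j, c j • ((B j)ᵀ * B j)).PosDef := by
  have hquad : ∀ j (x : ι → ℝ),
      star x ⬝ᵥ ((B j)ᵀ * B j) *ᵥ x = star (B j *ᵥ x) ⬝ᵥ (B j *ᵥ x) := fun j x => by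
    simp only [star_trivial, ← mulVec_mulVec, dotProduct_mulVec, vecMul_transpose]
  refine .of_dotProduct_mulVec_pos ?_ fun x hx => ?_
  · simp [IsHermitian, transpose_sum, transpose_smul, transpose_mul]
  obtain ⟨j₀, hj₀⟩ : ∃ j, B j *ᵥ x ≠ 0 := by
    by_contra! h
    exact hx (hker x h)
  simp only [sum_mulVec, smul_mulVec, dotProduct_sum, dotProduct_smul, hquad, smul_eq_mul]
  exact Finset.sum_pos' (fun j _ => mul_nonneg (hc j).le (dotProduct_star_self_nonneg _))
    ⟨j₀, Finset.mem_univ _, mul_pos (hc j₀) (dotProduct_star_self_pos_iff.2 hj₀)⟩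

lemma measure_eq_top_of_mem_nhds_of_add_smul_mem {E : Type*} [NormedAddCommGroup E]
    [NormedSpace ℝ E] [MeasurableSpace E] [BorelSpace E] [FiniteDimensional ℝ E]
    (μ : Measure E) [μ.IsAddHaarMeasure] {S : Set E} (hS : S ∈ 𝓝 0) {v : E} (hv : v ≠ 0)
    (hSv : ∀ x ∈ S, ∀ t : ℝ, x + t • v ∈ S) : μ S = ⊤ := by
  refine top_le_iff.1 ?_
  obtain ⟨ε, hε, hball⟩ := Metric.mem_nhds_iff.1 hS
  set w : E := (2 * ε / ‖v‖) • v
  have hw : ‖w‖ = 2 * ε := by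
    rw [norm_smul, Real.norm_of_nonneg (by positivity), div_mul_cancel₀ _ (norm_ne_zero_iff.2 hv)]
  have hsub : ∀ k : ℕ, Metric.ball ((k : ℝ) • w) ε ⊆ S := fun k y hy => by
    have h₀ : y - (k : ℝ) • w ∈ S := hball (by rwa [mem_ball_zero_iff, ← dist_eq_norm])
    simpa [w, smul_smul] using hSv _ h₀ (k * (2 * ε / ‖v‖))
  have hdisj :
      Pairwise (Function.onFun Disjoint fun k : ℕ => Metric.ball ((k : ℝ) • w) ε) := by
    intro k l hkl
    apply Metric.ball_disjoint_ball
    rw [dist_eq_norm, ← sub_smul, norm_smul, hw, Real.norm_eq_abs]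
    have : (1 : ℝ) ≤ |(k : ℝ) - l| := by
      exact_mod_cast Int.one_le_abs (by omega : (k : ℤ) - l ≠ 0)
    nlinarith
  calc ⊤ = ∑' k : ℕ, μ (Metric.ball ((k : ℝ) • w) ε) := by
        simp only [Measure.addHaar_ball_center]
        exact (ENNReal.tsum_const_eq_top_of_ne_zero (Metric.measure_ball_pos μ _ hε).ne').symm
    _ = μ (⋃ k : ℕ, Metric.ball ((k : ℝ) • w) ε) :=
        (measure_iUnion hdisj fun _ => measurableSet_ball).symm
    _ ≤ μ S := measure_mono (Set.iUnion_subset hsub)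

lemma measurable_mulVec {ι κ : Type*} [Finite ι] [Fintype κ] (A : Matrix ι κ ℝ) :
    Measurable (A *ᵥ ·) :=
  (continuous_const.matrix_mulVec continuous_id).measurable

lemma lintegral_comp_mulVec {ι : Type*} [Fintype ι] [DecidableEq ι] {A : Matrix ι ι ℝ}
    (hA : A.det ≠ 0) {F : (ι → ℝ) → ℝ≥0∞} (hF : Measurable F) :
    ∫⁻ x, F (A *ᵥ x) = ENNReal.ofReal |A.det|⁻¹ * ∫⁻ y, F y := by
  rw [← abs_inv, ← smul_eq_mul, ← lintegral_smul_measure,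
    ← Real.map_matrix_volume_pi_eq_smul_volume_pi hA, lintegral_map hF
      (toLin' A).continuous_of_finiteDimensional.measurable]
  rfl

section BrascampLieb

variable {m n : ℕ} {nd : Fin m → ℕ}

lemma BLratio_le_BLconst {B : MTrans m n nd} {c : Fin m → ℝ}
    {f : ∀ j : Fin m, (Fin (nd j) → ℝ) → ℝ≥0∞} (hf : IsInput f) :
    BLratio B c f ≤ BLconst B c :=
  le_iSup₂ (f := fun g (_ : IsInput g) => BLratio B c g) f hf

lemma eq_zero_of_BLconst_lt_top {B : MTrans m n nd} {c : Fin m → ℝ} (hc : ∀ j, 0 < c j)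
    (hB : BLconst B c < ⊤) {u : Fin n → ℝ} (hu : ∀ j, B j *ᵥ u = 0) : u = 0 := by
  by_contra hu₀
  set f : ∀ j : Fin m, (Fin (nd j) → ℝ) → ℝ≥0∞ :=
    fun _ => (Metric.closedBall 0 1).indicator 1
  have hf_int : ∀ j, ∫⁻ y, f j y = volume (Metric.closedBall (0 : Fin (nd j) → ℝ) 1) :=
    fun _ => lintegral_indicator_one measurableSet_closedBall
  have hf : IsInput f := fun j => ⟨measurable_one.indicator measurableSet_closedBall,
    hf_int j ▸ Metric.measure_closedBall_pos volume 0 one_pos,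
    hf_int j ▸ measure_closedBall_lt_top⟩
  set S : Set (Fin n → ℝ) := ⋂ j, (B j *ᵥ ·) ⁻¹' Metric.closedBall 0 1
  have hS_meas : MeasurableSet S :=
    .iInter fun j => measurable_mulVec (B j) measurableSet_closedBall
  have hS_nhds : S ∈ 𝓝 0 := Filter.iInter_mem.2 fun j =>
    (continuous_const.matrix_mulVec continuous_id).continuousAt.preimage_mem_nhds
      (by simpa using Metric.closedBall_mem_nhds (0 : Fin (nd j) → ℝ) one_pos)
  have hS_line : ∀ x ∈ S, ∀ t : ℝ, x + t • u ∈ S := fun x hx t => by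
    simpa [S, mulVec_add, mulVec_smul, hu] using hx
  have hS_ind : ∀ x, ∏ j, f j (B j *ᵥ x) ^ c j = S.indicator 1 x := fun x => by
    by_cases hx : x ∈ S
    · rw [Set.indicator_of_mem hx]
      refine Finset.prod_eq_one fun j _ => ?_
      rw [show f j (B j *ᵥ x) = 1 from Set.indicator_of_mem (Set.mem_iInter.1 hx j) 1,
        ENNReal.one_rpow]
    · rw [Set.indicator_of_notMem hx]
      obtain ⟨j, hj⟩ := not_forall.1 (Set.mem_iInter.not.1 hx)
      refine Finset.prod_eq_zero (Finset.mem_univ j) ?_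
      rw [show f j (B j *ᵥ x) = 0 from Set.indicator_of_notMem hj 1,
        ENNReal.zero_rpow_of_pos (hc j)]
  have hden : ∏ j, (∫⁻ y, f j y) ^ c j ≠ ⊤ :=
    ENNReal.prod_ne_top fun j _ => ENNReal.rpow_ne_top_of_nonneg (hc j).le (hf j).2.2.ne
  have hratio : BLratio B c f = ⊤ := by
    rw [BLratio, lintegral_congr hS_ind, lintegral_indicator_one hS_meas,
      measure_eq_top_of_mem_nhds_of_add_smul_mem volume hS_nhds hu₀ hS_line,
      ENNReal.top_div_of_ne_top hden]
  exact hB.ne (top_le_iff.1 (hratio ▸ BLratio_le_BLconst hf))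

lemma BLconst_mul_right {T : Matrix (Fin n) (Fin n) ℝ} (hT : T.det ≠ 0) (B : MTrans m n nd)
    (c : Fin m → ℝ) :
    BLconst (fun j => B j * T) c = ENNReal.ofReal |T.det|⁻¹ * BLconst B c := by
  simp only [BLconst, ENNReal.mul_iSup]
  refine iSup_congr fun f => iSup_congr fun hf => ?_
  rw [BLratio, BLratio, ← mul_div_assoc]
  congr 1
  simp_rw [← mulVec_mulVec]
  exact lintegral_comp_mulVec hT (Finset.measurable_prod _ fun j _ =>
    ((hf j).1.comp (measurable_mulVec (B j))).pow_const _)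

lemma BLconst_inv_mul_le {Tj : ∀ j, Matrix (Fin (nd j)) (Fin (nd j)) ℝ}
    (hTj : ∀ j, (Tj j).det ≠ 0) (B : MTrans m n nd) (c : Fin m → ℝ) :
    BLconst (fun j => (Tj j)⁻¹ * B j) c ≤
      (∏ j, ENNReal.ofReal |(Tj j).det| ^ c j) * BLconst B c := by
  refine iSup₂_le fun f hf => ?_
  set d : Fin m → ℝ≥0∞ := fun j => ENNReal.ofReal |(Tj j).det|
  have hd₀ : ∀ j, d j ≠ 0 := fun j => by simpa [d] using hTj j
  set g : ∀ j : Fin m, (Fin (nd j) → ℝ) → ℝ≥0∞ := fun j y => f j ((Tj j)⁻¹ *ᵥ y)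
  have hg_int : ∀ j, ∫⁻ y, g j y = d j * ∫⁻ y, f j y := fun j => by
    have hdet : ((Tj j)⁻¹).det = ((Tj j).det)⁻¹ := by
      rw [det_nonsing_inv, Ring.inverse_eq_inv']
    rw [lintegral_comp_mulVec (by simpa [hdet] using hTj j) (hf j).1, hdet, abs_inv, inv_inv]
  have hg : IsInput g := fun j => ⟨(hf j).1.comp (measurable_mulVec _),
    hg_int j ▸ ENNReal.mul_pos (hd₀ j) (hf j).2.1.ne',
    hg_int j ▸ ENNReal.mul_lt_top ENNReal.ofReal_lt_top (hf j).2.2⟩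
  set D := ∏ j, d j ^ c j
  have hD₀ : D ≠ 0 := Finset.prod_ne_zero_iff.2 fun j _ =>
    (ENNReal.rpow_pos (pos_iff_ne_zero.2 (hd₀ j)) ENNReal.ofReal_ne_top).ne'
  have hD : D ≠ ⊤ := ENNReal.prod_ne_top fun j _ =>
    ENNReal.rpow_ne_top_of_ne_zero (hd₀ j) ENNReal.ofReal_ne_top
  have hnum :
      ∫⁻ x, ∏ j, f j (((Tj j)⁻¹ * B j) *ᵥ x) ^ c j = ∫⁻ x, ∏ j, g j (B j *ᵥ x) ^ c j := by
    refine lintegral_congr fun x => Finset.prod_congr rfl fun j _ => ?_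
    rw [← mulVec_mulVec]
  have hden : ∏ j, (∫⁻ y, g j y) ^ c j = D * ∏ j, (∫⁻ y, f j y) ^ c j := by
    rw [← Finset.prod_mul_distrib]
    exact Finset.prod_congr rfl fun j _ => by
      rw [hg_int j, ENNReal.mul_rpow_of_ne_top ENNReal.ofReal_ne_top (hf j).2.2.ne]
  calc BLratio (fun j => (Tj j)⁻¹ * B j) c f = D * BLratio B c g := by
        rw [BLratio, BLratio, hnum, hden, ← mul_div_assoc,
          ENNReal.mul_div_mul_left _ _ hD₀ hD]
    _ ≤ D * BLconst B c := by gcongr; exact BLratio_le_BLconst hg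

lemma EquivTrans.BLconst_lt_top {B Bt : MTrans m n nd} {c : Fin m → ℝ} (h : EquivTrans B Bt)
    (hB : BLconst B c < ⊤) : BLconst Bt c < ⊤ := by
  obtain ⟨T, Tj, hT, hTj, hBt⟩ := h
  obtain rfl : Bt = fun j => (Tj j)⁻¹ * B j * T := funext hBt
  have hdet : ∀ {k} {A : Matrix (Fin k) (Fin k) ℝ}, IsUnit A → A.det ≠ 0 :=
    fun hA => ((isUnit_iff_isUnit_det _).1 hA).ne_zero
  rw [BLconst_mul_right (B := fun j => (Tj j)⁻¹ * B j) (hdet hT)]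
  refine ENNReal.mul_lt_top ENNReal.ofReal_lt_top
    ((BLconst_inv_mul_le (fun j => hdet (hTj j)) B c).trans_lt (ENNReal.mul_lt_top ?_ hB))
  exact (ENNReal.prod_ne_top fun j _ => ENNReal.rpow_ne_top_of_ne_zero
    (by simpa using hdet (hTj j)) ENNReal.ofReal_ne_top).lt_top

lemma phiMap_of_posDef {B : MTrans m n nd} {j : Fin m} (h : (B j * (B j)ᵀ).PosDef) :
    phiMap B j = (cfc Real.sqrt (B j * (B j)ᵀ))⁻¹ * B j := by
  rw [phiMap, dif_pos h, h.posSemidef.1.cfc_eq]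
  rfl

lemma psiMap_of_posDef {B : MTrans m n nd} {c : Fin m → ℝ}
    (h : (∑ i, c i • ((B i)ᵀ * B i)).PosDef) (j : Fin m) :
    psiMap c B j = B j * (cfc Real.sqrt (∑ i, c i • ((B i)ᵀ * B i)))⁻¹ := by
  rw [psiMap, dif_pos h, h.posSemidef.1.cfc_eq]
  rfl

end BrascampLieb

theorem PhiMap_wellDefined_equiv_memF {m n : ℕ} {nd : Fin m → ℕ} (c : Fin m → ℝ)
    (hc : ∀ j, 0 < c j) (B : MTrans m n nd) (hB : MemF B c) :
    (∑ j, c j • ((B j)ᵀ * B j)).PosDef ∧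
      (∀ j, (psiMap c B j * (psiMap c B j)ᵀ).PosDef) ∧
      EquivTrans B (PhiMap c B) ∧ MemF (PhiMap c B) c := by
  obtain ⟨hfin, hnorm⟩ := hB
  have hM : (∑ j, c j • ((B j)ᵀ * B j)).PosDef :=
    posDef_sum_smul_transpose_mul_self hc fun u => eq_zero_of_BLconst_lt_top hc hfin
  set S := cfc Real.sqrt (∑ j, c j • ((B j)ᵀ * B j))
  have hS : IsUnit S := isUnit_cfc_sqrt hM
  have hψ : ∀ j, (psiMap c B j * (psiMap c B j)ᵀ).PosDef := fun j => by
    refine posDef_mul_transpose_self_of_mul_eq_one (D := S * (B j)ᵀ) ?_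
    rw [psiMap_of_posDef hM, Matrix.mul_assoc, ← Matrix.mul_assoc S⁻¹,
      nonsing_inv_mul S ((isUnit_iff_isUnit_det S).1 hS), Matrix.one_mul, hnorm j]
  have hequiv : EquivTrans B (PhiMap c B) :=
    ⟨S⁻¹, fun j => cfc Real.sqrt (psiMap c B j * (psiMap c B j)ᵀ),
      isUnit_nonsing_inv_iff.2 hS, fun j => isUnit_cfc_sqrt (hψ j), fun j => by
        rw [Matrix.mul_assoc, ← psiMap_of_posDef hM]
        exact phiMap_of_posDef (hψ j)⟩
  refine ⟨hM, hψ, hequiv, hequiv.BLconst_lt_top hfin, fun j => ?_⟩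
  rw [PhiMap, phiMap_of_posDef (hψ j)]
  exact inv_cfc_sqrt_mul_transpose_self (hψ j)
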